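/- Let q, r ∈ F₂[x] be squarefree, let b ∈ F₂[x] be coprime to r, and let s ∈ F₂[x]. Then the number of a ∈ (F₂[x]/(q))^× such that the denominator (in lowest terms) of a/q + b/r equals s is at most 2^{deg s + deg(gcd(q,r)) − deg r}. -/

import Mathlib

open Polynomial
open scoped Classical

noncomputable section

abbrev F2 := ZMod 2
abbrev Kinf := LaurentSeries F2
def polyToK (f : F2[X]) : Kinf :=
  ∑ i ∈ f.support, HahnSeries.single (-(i : ℤ)) (f.coeff i)
def ordK (a : Kinf) : WithBot ℤ := if a = 0 then ⊥ else (↑(-a.order) : WithBot ℤ)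
def eKr (a : Kinf) : ℝ := (-1 : ℝ) ^ ((a.coeff 1).val)
def eK (a : Kinf) : ℂ := ((eKr a : ℝ) : ℂ)
def InT (θ : Kinf) : Prop := ordK θ ≤ ((-1 : ℤ) : WithBot ℤ)
def GN (N : ℕ) : Finset F2[X] :=
  Set.Finite.toFinset (s := {f : F2[X] | f.degree < (N : ℕ)}) (by
    have h : {f : F2[X] | f.degree < (N : ℕ)} = ↑(Polynomial.degreeLT F2 N) := by
      ext f
      simp [Polynomial.mem_degreeLT]
    rw [h]
    have : Finite (Polynomial.degreeLT F2 N) :=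
      Finite.of_equiv _ (Polynomial.degreeLTEquiv F2 N).symm.toEquiv
    exact (Polynomial.degreeLT F2 N : Set F2[X]).toFinite)
def ratK (u s : F2[X]) : Kinf := polyToK u * (polyToK s)⁻¹

/-- τ(f): the number of divisors of `f`. -/
def tau (f : F2[X]) : ℕ := ((GN (f.natDegree + 1)).filter (fun g => g ∣ f)).card

/-- φ(f): the number of invertible residues modulo `f`. -/
def phi (f : F2[X]) : ℕ := ((GN f.natDegree).filter (fun g => IsCoprime g f)).card

/-- ω(f): the number of (irreducible nonconstant, i.e. prime) divisors of `f`. -/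
def omegaP (f : F2[X]) : ℕ :=
  ((GN (f.natDegree + 1)).filter (fun r => Irreducible r ∧ r ∣ f)).card

/-- The Möbius function on `F₂[x]`. -/
def mu (f : F2[X]) : ℤ := if Squarefree f then (-1) ^ (omegaP f) else 0

/-- The set of invertible residues modulo `s` (canonical representatives of
`(F₂[x]/(s))^×`, i.e. polynomials of degree `< deg s` coprime to `s`). -/
def residues (s : F2[X]) : Finset F2[X] := (GN s.natDegree).filter (fun t => IsCoprime t s)

/-- `α(s) = μ(s)/φ(s)`. -/
def alphaA (s : F2[X]) : ℝ := (mu s : ℝ) / (phi s : ℝ)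

/-- `α'(s) = ∏_{r | s prime} 3/(2^{deg r}+3)` for `s` squarefree, `0` otherwise. -/
def alphaB (s : F2[X]) : ℝ :=
  if Squarefree s then
    ∏ r ∈ (GN (s.natDegree + 1)).filter (fun r => Irreducible r ∧ r ∣ s),
      (3 : ℝ) / ((2 : ℝ) ^ r.natDegree + 3)
  else 0

/-- `Λ_M(f) = Σ_{s ∈ G_M} α(s) Σ_{t ∈ (F₂[x]/(s))^×} e(f t s⁻¹)`. -/
def LambdaM (M : ℕ) (f : F2[X]) : ℝ :=
  ∑ s ∈ GN M, alphaA s * ∑ t ∈ residues s, eKr (polyToK f * ratK t s)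

/-- `H_M(f) = Σ_{s ∈ G_M} α'(s) Σ_{t ∈ (F₂[x]/(s))^×} e(f t s⁻¹)`. -/
def HM (M : ℕ) (f : F2[X]) : ℝ :=
  ∑ s ∈ GN M, alphaB s * ∑ t ∈ residues s, eKr (polyToK f * ratK t s)

/-- `Λ'(f) = deg f` if `f` is prime, `0` otherwise. -/
def LambdaP (f : F2[X]) : ℝ := if Irreducible f then (f.natDegree : ℝ) else 0

/-- `Ψ(f) = Λ'(f+1) H_Q(f) 1_{f ∈ G_N}`. -/
def Psi (N Q : ℕ) (f : F2[X]) : ℝ :=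
  LambdaP (f + 1) * HM Q f * (if f ∈ GN N then 1 else 0)

/-- `Ψ'(f) = Λ_R(f+1) H_Q(f) 1_{f ∈ G_N}`. -/
def Psi' (N R Q : ℕ) (f : F2[X]) : ℝ :=
  LambdaM R (f + 1) * HM Q f * (if f ∈ GN N then 1 else 0)

/-- `Λ_r(f)` for a single prime `r`. -/
def Lambda_r (r f : F2[X]) : ℝ :=
  if r ∣ f then 0 else (2 : ℝ) ^ r.natDegree / ((2 : ℝ) ^ r.natDegree - 1)

/-- `τ²_r(f)` for a single prime `r`. -/
def tauSq_r (r f : F2[X]) : ℝ :=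
  if r ∣ f then 4 * (2 : ℝ) ^ r.natDegree / ((2 : ℝ) ^ r.natDegree + 3)
  else (2 : ℝ) ^ r.natDegree / ((2 : ℝ) ^ r.natDegree + 3)

/-- `˜Λ_M(f) = ∏_{r ∈ G_M prime} Λ_r(f)`. -/
def LambdaTilde (M : ℕ) (f : F2[X]) : ℝ :=
  ∏ r ∈ (GN M).filter (fun r => Irreducible r), Lambda_r r f

/-- `˜H_M(f) = ∏_{r ∈ G_M prime} τ²_r(f)`. -/
def HTilde (M : ℕ) (f : F2[X]) : ℝ :=
  ∏ r ∈ (GN M).filter (fun r => Irreducible r), tauSq_r r f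

/-- The element of `K∞` determined by a rational function (with `x ↦ t⁻¹`). -/
def ratToK (l : RatFunc F2) : Kinf := polyToK l.num * (polyToK l.denom)⁻¹

/-- `c : F₂(x)/F₂[x] → ℝ` (encoded on the canonical representatives
`λ = num/denom` in lowest terms with `deg num < deg denom`) is the system of Fourier
coefficients of `F : F₂[x] → ℝ`, i.e. `F(f) = Σ_λ c(λ) e(λ f)`. -/
def IsFourierCoeffs (F : F2[X] → ℝ) (c : RatFunc F2 → ℝ) : Prop :=
  (Function.support c).Finite ∧
  (∀ l : RatFunc F2, c l ≠ 0 → (l.num).degree < (l.denom).degree) ∧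
  ∀ f : F2[X], F f = ∑ᶠ l : RatFunc F2, c l * eKr (ratToK l * polyToK f)

/-- The canonical representative (mod `F₂[x]`) of a rational function. -/
def fracRat (l : RatFunc F2) : RatFunc F2 :=
  l - algebraMap F2[X] (RatFunc F2) (l.num / l.denom)

/-- `c(n, η)` from the statement of the exponential sum estimate for `Λ'`. -/
def cFun (n : ℕ) (η : Kinf) : ℝ :=
  if ordK η < ((-(n : ℤ) - 1 : ℤ) : WithBot ℤ) then 1
  else if ordK η = ((-(n : ℤ) - 1 : ℤ) : WithBot ℤ) then -1
  else 0

/-- The class `C_B(X)` (with explicit implied constant `Cst`): functions whose Fourier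
coefficients are supported on `λ` with squarefree denominator of degree `≤ X` and satisfy
`|c(λ)| ≤ Cst · τ(denom λ)^B / 2^{deg (denom λ)}`. -/
def InClassC (B X : ℕ) (Cst : ℝ) (F : F2[X] → ℝ) : Prop :=
  ∃ c : RatFunc F2 → ℝ, IsFourierCoeffs F c ∧
    (∀ l : RatFunc F2, c l ≠ 0 → Squarefree l.denom ∧ (l.denom).natDegree ≤ X) ∧
    (∀ l : RatFunc F2, |c l| ≤ Cst * (tau l.denom : ℝ) ^ B / 2 ^ (l.denom).natDegree)

/-- The fractional part `‖θ‖` of `θ ∈ K∞`: keep exactly the coefficients of `x^{-n}`, `n ≥ 1`. -/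
def fracK (θ : Kinf) : Kinf :=
  ⟨fun n => if 1 ≤ n then θ.coeff n else 0, by
    apply θ.isPWO_support'.mono
    intro n hn
    simp only [Function.mem_support, ne_eq] at hn ⊢
    intro h
    apply hn
    split_ifs
    · exact h
    · rfl⟩

/-! Write `k = gcd(q, s)` and `q = k u`. For two admissible `a, a'` the difference
`a/q - a'/q` has denominator dividing `s²`, so `q ∣ (a - a') s²`; as `q` is squarefree, `u` is
coprime to `s`, hence `a ≡ a' (mod u)` and at most `2^{deg k}` residues are admissible.
Writing `r = gcd(q, r) r'`, squarefreeness of `r` makes `r'` coprime to `q`, and `r'` is coprime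
to `b`, so `r'` divides the denominator `s` of `a/q + b/r`; with `k ∣ s` this gives
`deg k + deg r' ≤ deg s`. -/

lemma isRelPrime_of_squarefree_mul {R : Type*} [CommMonoid R] {d u s : R}
    (h : Squarefree (d * u)) (hd : ∀ e, e ∣ u → e ∣ s → e ∣ d) : IsRelPrime u s :=
  fun e heu hes => h e (mul_dvd_mul (hd e heu hes) heu)

namespace RatFunc

variable {K : Type*} [Field K]

lemma dvd_mul_denom_of_eq_div {x : RatFunc K} {p q : K[X]} (hq : q ≠ 0)
    (hx : x = algebraMap K[X] (RatFunc K) p / algebraMap K[X] (RatFunc K) q) :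
    q ∣ p * x.denom :=
  ⟨x.num, by rw [← (num_mul_eq_mul_denom_iff hq).mpr hx, mul_comm]⟩

lemma denom_sub_dvd (x y : RatFunc K) : (x - y).denom ∣ x.denom * y.denom := by
  rw [denom_dvd (mul_ne_zero x.denom_ne_zero y.denom_ne_zero)]
  refine ⟨x.num * y.denom - x.denom * y.num, ?_⟩
  rw [map_mul, map_sub, map_mul, map_mul, ← div_sub_div _ _
    (algebraMap_ne_zero x.denom_ne_zero) (algebraMap_ne_zero y.denom_ne_zero),
    num_div_denom, num_div_denom]

lemma dvd_sub_mul_denom_mul_denom_of_add {a a' q : K[X]} (c : RatFunc K) (hq : q ≠ 0) :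
    q ∣ (a - a') *
      ((algebraMap K[X] (RatFunc K) a / algebraMap K[X] (RatFunc K) q + c).denom *
        (algebraMap K[X] (RatFunc K) a' / algebraMap K[X] (RatFunc K) q + c).denom) := by
  refine (dvd_mul_denom_of_eq_div hq ?_).trans (mul_dvd_mul_left _ (denom_sub_dvd _ _))
  rw [map_sub, sub_div]
  ring

lemma dvd_denom_div_add_div {a b q r r' : K[X]} (hq : q ≠ 0) (hr : r ≠ 0) (hr'r : r' ∣ r)
    (hr'q : IsCoprime r' q) (hr'b : IsCoprime r' b) :
    r' ∣ (algebraMap K[X] (RatFunc K) a / algebraMap K[X] (RatFunc K) q +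
      algebraMap K[X] (RatFunc K) b / algebraMap K[X] (RatFunc K) r).denom := by
  set x := algebraMap K[X] (RatFunc K) a / algebraMap K[X] (RatFunc K) q +
      algebraMap K[X] (RatFunc K) b / algebraMap K[X] (RatFunc K) r with hx_def
  have hx : x = algebraMap K[X] (RatFunc K) (a * r + q * b) /
      algebraMap K[X] (RatFunc K) (q * r) := by
    rw [hx_def, div_add_div _ _ (algebraMap_ne_zero hq) (algebraMap_ne_zero hr)]
    simp only [map_add, map_mul]
  have hsum : r' ∣ (a * r + q * b) * x.denom :=
    (hr'r.trans (dvd_mul_left r q)).trans (dvd_mul_denom_of_eq_div (mul_ne_zero hq hr) hx)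
  rw [add_mul] at hsum
  exact (hr'q.mul_right hr'b).dvd_of_dvd_mul_left
    ((dvd_add_right (dvd_mul_of_dvd_left (dvd_mul_of_dvd_right hr'r a) _)).mp hsum)

lemma natDegree_gcd_denom_add_natDegree_le [DecidableEq K[X]] {a b q r : K[X]} (hq : q ≠ 0)
    (hr : Squarefree r) (hb : IsCoprime b r) :
    let s := (algebraMap K[X] (RatFunc K) a / algebraMap K[X] (RatFunc K) q +
      algebraMap K[X] (RatFunc K) b / algebraMap K[X] (RatFunc K) r).denom
    (EuclideanDomain.gcd q s).natDegree + r.natDegree ≤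
      s.natDegree + (EuclideanDomain.gcd q r).natDegree := by
  intro s
  obtain ⟨r', hr_eq⟩ : EuclideanDomain.gcd q r ∣ r := EuclideanDomain.gcd_dvd_right q r
  have hgr'0 : EuclideanDomain.gcd q r * r' ≠ 0 := hr_eq ▸ hr.ne_zero
  have hr'r : r' ∣ r := hr_eq ▸ dvd_mul_left _ _
  have hr'q : IsCoprime r' q := IsRelPrime.isCoprime <| isRelPrime_of_squarefree_mul (hr_eq ▸ hr)
    fun e her' heq => EuclideanDomain.dvd_gcd heq (hr_eq ▸ dvd_mul_of_dvd_right her' _)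
  have hr's : r' ∣ s := dvd_denom_div_add_div hq hr.ne_zero hr'r hr'q
    (hb.symm.of_isCoprime_of_dvd_left hr'r)
  have hkr' : IsCoprime (EuclideanDomain.gcd q s) r' :=
    hr'q.symm.of_isCoprime_of_dvd_left (EuclideanDomain.gcd_dvd_left q s)
  have hk0 : EuclideanDomain.gcd q s ≠ 0 := fun h => hq (EuclideanDomain.gcd_eq_zero_iff.mp h).1
  have hkr's := natDegree_le_of_dvd (hkr'.mul_dvd (EuclideanDomain.gcd_dvd_right q s) hr's)
    (denom_ne_zero _)
  rw [natDegree_mul hk0 (right_ne_zero_of_mul hgr'0)] at hkr's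
  have hdeg_r : r.natDegree = (EuclideanDomain.gcd q r).natDegree + r'.natDegree := by
    conv_lhs => rw [hr_eq]
    exact natDegree_mul (left_ne_zero_of_mul hgr'0) (right_ne_zero_of_mul hgr'0)
  omega

end RatFunc

lemma mem_GN_iff {N : ℕ} {f : F2[X]} : f ∈ GN N ↔ f.degree < N := by
  simp [GN]

lemma card_GN (N : ℕ) : (GN N).card = 2 ^ N := by
  have e : ((GN N : Finset F2[X]) : Set F2[X]) = Polynomial.degreeLT F2 N := by
    ext f
    simp [mem_GN_iff, Polynomial.mem_degreeLT]
  rw [← Nat.card_eq_finsetCard]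
  calc Nat.card (GN N) = Nat.card (Fin N → F2) :=
        Nat.card_congr ((Equiv.setCongr e).trans (Polynomial.degreeLTEquiv F2 N).toEquiv)
    _ = 2 ^ N := by simp

lemma card_filter_dvd_GN_le {u : F2[X]} (hu : u ≠ 0) (m : ℕ) :
    ((GN (u.natDegree + m)).filter (u ∣ ·)).card ≤ 2 ^ m := by
  rw [← card_GN m]
  refine (Finset.card_le_card fun c hc => ?_).trans
    (Finset.card_image_le (s := GN m) (f := (u * ·)))
  obtain ⟨hcN, w, rfl⟩ := Finset.mem_filter.mp hc
  refine Finset.mem_image.mpr ⟨w, mem_GN_iff.mpr ?_, rfl⟩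
  rcases eq_or_ne w 0 with rfl | hw
  · rw [degree_zero]
    exact WithBot.bot_lt_coe m
  rw [mem_GN_iff, degree_mul, degree_eq_natDegree hu, degree_eq_natDegree hw] at hcN
  have hdeg : u.natDegree + w.natDegree < u.natDegree + m := by exact_mod_cast hcN
  rw [degree_eq_natDegree hw]
  exact_mod_cast (by omega : w.natDegree < m)

lemma card_le_of_forall_dvd_sub {T : Finset F2[X]} {u : F2[X]} {m : ℕ} (hu : u ≠ 0)
    (hT : T ⊆ GN (u.natDegree + m)) (hdvd : ∀ a ∈ T, ∀ a' ∈ T, u ∣ a - a') :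
    T.card ≤ 2 ^ m := by
  rcases T.eq_empty_or_nonempty with rfl | ⟨a₀, ha₀⟩
  · simp
  refine (Finset.card_le_card_of_injOn (· - a₀) (fun a ha => ?_)
    (fun a _ a' _ h => sub_left_injective h)).trans (card_filter_dvd_GN_le hu m)
  refine Finset.mem_filter.mpr ⟨mem_GN_iff.mpr ?_, hdvd a ha a₀ ha₀⟩
  exact (degree_sub_le a a₀).trans_lt
    (max_lt (mem_GN_iff.mp (hT ha)) (mem_GN_iff.mp (hT ha₀)))

lemma card_filter_denom_div_add_eq_le {q : F2[X]} (hq : Squarefree q) (c : RatFunc F2)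
    (s : F2[X]) :
    ((residues q).filter (fun a =>
      (algebraMap F2[X] (RatFunc F2) a / algebraMap F2[X] (RatFunc F2) q + c).denom = s)).card ≤
      2 ^ (EuclideanDomain.gcd q s).natDegree := by
  obtain ⟨u, hq_eq⟩ : EuclideanDomain.gcd q s ∣ q := EuclideanDomain.gcd_dvd_left q s
  have hku0 : EuclideanDomain.gcd q s * u ≠ 0 := hq_eq ▸ hq.ne_zero
  have hus : IsCoprime u s := IsRelPrime.isCoprime <| isRelPrime_of_squarefree_mul (hq_eq ▸ hq)
    fun e heu hes => EuclideanDomain.dvd_gcd (hq_eq ▸ dvd_mul_of_dvd_right heu _) hes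
  refine card_le_of_forall_dvd_sub (right_ne_zero_of_mul hku0) (fun a ha => ?_)
    (fun a ha a' ha' => ?_)
  · rw [add_comm, ← natDegree_mul (left_ne_zero_of_mul hku0) (right_ne_zero_of_mul hku0),
      ← hq_eq]
    exact Finset.filter_subset _ _ (Finset.mem_filter.mp ha).1
  · have hq_dvd := RatFunc.dvd_sub_mul_denom_mul_denom_of_add (a := a) (a' := a') c hq.ne_zero
    rw [(Finset.mem_filter.mp ha).2, (Finset.mem_filter.mp ha').2] at hq_dvd
    exact (hus.mul_right hus).dvd_of_dvd_mul_right ((hq_eq ▸ dvd_mul_left u _).trans hq_dvd)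

/-- Let `q, r` be squarefree, `b` coprime to `r`, and `s` any polynomial. The number of
`a ∈ (F₂[x]/(q))^×` with `denom(a/q + b/r) = s` (denominator in lowest terms) is at most
`2^{deg s + deg gcd(q,r) − deg r}`. -/
theorem statement_6 (q r b s : F2[X]) (hq : Squarefree q) (hr : Squarefree r)
    (hb : IsCoprime b r) :
    (((residues q).filter (fun a =>
        RatFunc.denom (algebraMap F2[X] (RatFunc F2) a / algebraMap F2[X] (RatFunc F2) q +
          algebraMap F2[X] (RatFunc F2) b / algebraMap F2[X] (RatFunc F2) r) = s)).card : ℝ)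
      ≤ (2 : ℝ) ^ ((s.natDegree : ℤ) + ((EuclideanDomain.gcd q r).natDegree : ℤ)
          - (r.natDegree : ℤ)) := by
  set T := (residues q).filter (fun a =>
    RatFunc.denom (algebraMap F2[X] (RatFunc F2) a / algebraMap F2[X] (RatFunc F2) q +
      algebraMap F2[X] (RatFunc F2) b / algebraMap F2[X] (RatFunc F2) r) = s)
  rcases T.eq_empty_or_nonempty with hT | ⟨a₀, ha₀⟩
  · rw [hT, Finset.card_empty, Nat.cast_zero]
    positivity
  have hdeg := RatFunc.natDegree_gcd_denom_add_natDegree_le (a := a₀) hq.ne_zero hr hb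
  rw [(Finset.mem_filter.mp ha₀).2] at hdeg
  calc (T.card : ℝ) ≤ (2 : ℝ) ^ ((EuclideanDomain.gcd q s).natDegree : ℤ) := by
        rw [zpow_natCast]
        exact_mod_cast card_filter_denom_div_add_eq_le hq _ s
    _ ≤ _ := zpow_le_zpow_right₀ one_le_two (by omega)
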